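/- Céa's lemma: if a is bounded with constant M and coercive with constant α on V, and u, u_h are the continuous and Galerkin solutions, then ‖u − u_h‖_V ≤ (M/α) inf_{v_h ∈ V_h} ‖u − v_h‖_V. -/

import Mathlib

/-- Céa's lemma. -/
theorem cea_lemma
    {V : Type*} [NormedAddCommGroup V] [InnerProductSpace ℝ V]
    (a : V →L[ℝ] V →L[ℝ] ℝ) (f : V →L[ℝ] ℝ)
    (M α : ℝ) (hα : 0 < α)
    (hbound : ∀ u v : V, |a u v| ≤ M * ‖u‖ * ‖v‖)
    (hcoercive : ∀ v : V, α * ‖v‖ ^ 2 ≤ a v v)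
    (Vh : Submodule ℝ V) (u uh : V) (huh : uh ∈ Vh)
    (hu : ∀ v : V, a u v = f v)
    (huh_sol : ∀ vh ∈ Vh, a uh vh = f vh) :
    ‖u - uh‖ ≤ (M / α) * ⨅ vh : Vh, ‖u - (vh : V)‖ := by
  set e := u - uh with he
  have horth : ∀ wh ∈ Vh, a e wh = 0 := by
    intro wh hwh
    simp [he, map_sub, ContinuousLinearMap.sub_apply, hu wh, huh_sol wh hwh]
  have hbdd : BddBelow (Set.range fun vh : Vh => ‖u - (vh : V)‖) :=
    ⟨0, by rintro x ⟨vh, rfl⟩; exact norm_nonneg _⟩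
  have hinf_nonneg : (0 : ℝ) ≤ ⨅ vh : Vh, ‖u - (vh : V)‖ :=
    le_ciInf fun vh => norm_nonneg _
  by_cases hee : e = 0
  · have h0 : ‖u - uh‖ = 0 := by rw [← he, hee, norm_zero]
    have hle : (⨅ vh : Vh, ‖u - (vh : V)‖) ≤ 0 := by
      have := ciInf_le hbdd (⟨uh, huh⟩ : Vh)
      simpa [h0] using this
    have : (⨅ vh : Vh, ‖u - (vh : V)‖) = 0 := le_antisymm hle hinf_nonneg
    rw [h0, this, mul_zero]
  · have hne : 0 < ‖e‖ := norm_pos_iff.mpr hee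
    have hkey : ∀ vh : Vh, α * ‖e‖ ≤ M * ‖u - (vh : V)‖ := by
      intro vh
      have h1 : a e e = a e (u - (vh : V)) := by
        have horth' := horth ((vh : V) - uh) (Vh.sub_mem vh.2 huh)
        have hdecomp : e = (u - (vh : V)) + ((vh : V) - uh) := by
          rw [he]; abel
        calc a e e = a e ((u - (vh : V)) + ((vh : V) - uh)) := by rw [← hdecomp]
          _ = a e (u - (vh : V)) + a e ((vh : V) - uh) := map_add _ _ _
          _ = a e (u - (vh : V)) := by rw [horth', add_zero]
      have h2 : α * ‖e‖ ^ 2 ≤ M * ‖e‖ * ‖u - (vh : V)‖ := by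
        calc α * ‖e‖ ^ 2 ≤ a e e := hcoercive e
          _ = a e (u - (vh : V)) := h1
          _ ≤ |a e (u - (vh : V))| := le_abs_self _
          _ ≤ M * ‖e‖ * ‖u - (vh : V)‖ := hbound _ _
      nlinarith [hne]
    have hM : 0 < M := by
      have := hkey ⟨uh, huh⟩
      simp only [← he] at this
      nlinarith [hne]
    have hstep : α / M * ‖e‖ ≤ ⨅ vh : Vh, ‖u - (vh : V)‖ := by
      refine le_ciInf fun vh => ?_
      rw [div_mul_eq_mul_div, div_le_iff₀ hM]
      calc α * ‖e‖ ≤ M * ‖u - (vh : V)‖ := hkey vh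
        _ = ‖u - (vh : V)‖ * M := mul_comm _ _
    have hfinal : ‖e‖ ≤ M / α * ⨅ vh : Vh, ‖u - (vh : V)‖ := by
      have h3 := mul_le_mul_of_nonneg_left hstep (le_of_lt (div_pos hM hα))
      have h4 : M / α * (α / M * ‖e‖) = ‖e‖ := by
        field_simp
      linarith [h3, h4.symm.le]
    simpa [he] using hfinal
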